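/- Let G be a strongly connected digraph with n ≥ 3 vertices, m arcs, maximum outdegree Δ⁺ and minimum outdegree δ⁺. If Δ⁺ ≥ (m − (n−1))/2 and δ⁺ = 1, then q(G) ≤ Δ⁺ + 2. -/

import Mathlib

/-!
With the outdegree vector `w = d⁺` as test vector, the Collatz–Wielandt bound gives
`q(G) ≤ maxᵢ (dᵢ⁺ + mᵢ⁺)`, since `(Q w)ᵢ = dᵢ⁺ (dᵢ⁺ + mᵢ⁺)`. If `dᵢ⁺ = 1` then `mᵢ⁺` is a single
outdegree, so `dᵢ⁺ + mᵢ⁺ ≤ 1 + Δ⁺`. If `dᵢ⁺ ≥ 2`, every vertex outside `N⁺(i)` has outdegree at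
least one and `i` itself (no loops) has outdegree `dᵢ⁺`, so `dᵢ⁺ mᵢ⁺ ≤ m - (n - 1) ≤ 2Δ⁺`; then
`d + 2Δ⁺/d ≤ Δ⁺ + 2` for `2 ≤ d ≤ Δ⁺` because `(d - 2)(Δ⁺ - d) ≥ 0`.
-/

open Matrix Finset

/-- Spectral radius of a complex square matrix: the largest modulus of its eigenvalues. -/
noncomputable def specRad {n : ℕ} (M : Matrix (Fin n) (Fin n) ℂ) : ℝ :=
  sSup {x : ℝ | ∃ μ ∈ spectrum ℂ M, x = ‖μ‖}

/-- Spectral radius of a real square matrix (via its complex eigenvalues). -/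
noncomputable def specRadR {n : ℕ} (M : Matrix (Fin n) (Fin n) ℝ) : ℝ :=
  specRad (M.map Complex.ofReal)

/-- Adjacency matrix of a digraph given by its arc relation. -/
def adjM {n : ℕ} (E : Fin n → Fin n → Prop) [DecidableRel E] :
    Matrix (Fin n) (Fin n) ℝ := fun i j => if E i j then 1 else 0

/-- Outdegree of vertex `i`. -/
def outdeg {n : ℕ} (E : Fin n → Fin n → Prop) [DecidableRel E] (i : Fin n) : ℕ :=
  (Finset.univ.filter (fun j => E i j)).card

/-- Signless Laplacian `Q(G) = D(G) + A(G)`. -/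
noncomputable def Qmat {n : ℕ} (E : Fin n → Fin n → Prop) [DecidableRel E] :
    Matrix (Fin n) (Fin n) ℝ :=
  Matrix.diagonal (fun i => (outdeg E i : ℝ)) + adjM E

/-- Signless Laplacian spectral radius `q(G)`. -/
noncomputable def qG {n : ℕ} (E : Fin n → Fin n → Prop) [DecidableRel E] : ℝ :=
  specRadR (Qmat E)

/-- Average 2-outdegree `m_i^+`. -/
noncomputable def m2 {n : ℕ} (E : Fin n → Fin n → Prop) [DecidableRel E] (i : Fin n) : ℝ :=
  (∑ j ∈ Finset.univ.filter (fun j => E i j), (outdeg E j : ℝ)) / (outdeg E i : ℝ)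

/-- The finset of arcs of the digraph. -/
def arcs {n : ℕ} (E : Fin n → Fin n → Prop) [DecidableRel E] : Finset (Fin n × Fin n) :=
  Finset.univ.filter (fun p => E p.1 p.2)

/-- Strong connectivity of a digraph. -/
def StrongConn {n : ℕ} (E : Fin n → Fin n → Prop) : Prop :=
  ∀ i j : Fin n, Relation.ReflTransGen E i j

/-- Irreducibility of a square matrix: the digraph of nonzero entries is strongly connected. -/
def MatIrred {n : ℕ} {α : Type*} [Zero α] (M : Matrix (Fin n) (Fin n) α) : Prop :=
  ∀ i j : Fin n, i ≠ j → Relation.TransGen (fun a b => M a b ≠ 0) i j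

theorem Matrix.exists_mulVec_eq_smul_of_mem_spectrum {ι K : Type*} [Fintype ι] [DecidableEq ι]
    [Field K] {A : Matrix ι ι K} {μ : K} (hμ : μ ∈ spectrum K A) : ∃ x ≠ 0, A *ᵥ x = μ • x := by
  rw [← spectrum_toLin'] at hμ
  obtain ⟨x, hx⟩ := (Module.End.hasEigenvalue_iff_mem_spectrum.mpr hμ).exists_hasEigenvector
  exact ⟨x, hx.2, by simpa using hx.apply_eq_smul⟩

/-- The Collatz–Wielandt bound. -/
theorem Matrix.exists_norm_mul_le_mulVec_of_mem_spectrum {ι : Type*} [Fintype ι] [DecidableEq ι]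
    {M : Matrix ι ι ℝ} (hM : ∀ i j, 0 ≤ M i j) {w : ι → ℝ} (hw : ∀ i, 0 < w i) {μ : ℂ}
    (hμ : μ ∈ spectrum ℂ (M.map Complex.ofReal)) : ∃ i, ‖μ‖ * w i ≤ (M *ᵥ w) i := by
  obtain ⟨x, hx0, hx⟩ := exists_mulVec_eq_smul_of_mem_spectrum hμ
  obtain ⟨k, hk⟩ := Function.ne_iff.mp hx0
  obtain ⟨i, -, hi⟩ := exists_max_image univ (fun j => ‖x j‖ / w j) ⟨k, mem_univ k⟩
  have hxi : 0 < ‖x i‖ / w i :=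
    (div_pos (norm_pos_iff.2 hk) (hw k)).trans_le (hi k (mem_univ k))
  refine ⟨i, le_of_mul_le_mul_right ?_ hxi⟩
  calc ‖μ‖ * w i * (‖x i‖ / w i) = ‖∑ j, (M i j : ℂ) * x j‖ := by
        rw [mul_assoc, mul_div_cancel₀ _ (hw i).ne', ← norm_mul, ← smul_eq_mul, ← Pi.smul_apply,
          ← hx]
        rfl
    _ ≤ ∑ j, M i j * ‖x j‖ := by
        refine (norm_sum_le _ _).trans_eq (sum_congr rfl fun j _ => ?_)
        rw [norm_mul, Complex.norm_real, Real.norm_of_nonneg (hM i j)]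
    _ ≤ ∑ j, M i j * (w j * (‖x i‖ / w i)) := by
        gcongr with j
        · exact hM i j
        · rw [mul_comm, ← div_le_iff₀ (hw j)]
          exact hi j (mem_univ j)
    _ = (M *ᵥ w) i * (‖x i‖ / w i) := by
        simp only [mulVec, dotProduct, sum_mul, mul_assoc]

theorem specRadR_le {n : ℕ} {M : Matrix (Fin n) (Fin n) ℝ} {b : ℝ}
    (h : ∀ μ ∈ spectrum ℂ (M.map Complex.ofReal), ‖μ‖ ≤ b) (hb : 0 ≤ b) : specRadR M ≤ b :=
  Real.sSup_le (by rintro _ ⟨μ, hμ, rfl⟩; exact h μ hμ) hb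

theorem add_div_le_add_two {d Δ S : ℝ} (hd : 2 ≤ d) (hdΔ : d ≤ Δ) (hS : S ≤ 2 * Δ) :
    d + S / d ≤ Δ + 2 := by
  rw [← le_sub_iff_add_le', div_le_iff₀ (by linarith)]
  nlinarith [mul_nonneg (sub_nonneg.2 hd) (sub_nonneg.2 hdΔ)]

section Digraph

variable {n : ℕ} {E : Fin n → Fin n → Prop} [DecidableRel E]

theorem Qmat_mulVec_outdeg (i : Fin n) :
    (Qmat E *ᵥ fun j => (outdeg E j : ℝ)) i
      = outdeg E i * outdeg E i + ∑ j ∈ univ.filter (fun j => E i j), (outdeg E j : ℝ) := by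
  rw [Qmat, add_mulVec, Pi.add_apply, mulVec_diagonal, sum_filter]
  simp [adjM, mulVec, dotProduct]

theorem Qmat_nonneg (i j : Fin n) : 0 ≤ Qmat E i j := by
  rw [Qmat, Matrix.add_apply, adjM, diagonal_apply]
  split_ifs <;> positivity

theorem qG_le_of_outdeg_add_m2_le (hpos : ∀ i, 0 < outdeg E i) {b : ℝ} (hb : 0 ≤ b)
    (h : ∀ i, outdeg E i + m2 E i ≤ b) : qG E ≤ b := by
  refine specRadR_le (fun μ hμ => ?_) hb
  have hw : ∀ i, (0 : ℝ) < outdeg E i := fun i => Nat.cast_pos.2 (hpos i)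
  obtain ⟨i, hi⟩ := exists_norm_mul_le_mulVec_of_mem_spectrum Qmat_nonneg hw hμ
  rw [Qmat_mulVec_outdeg, ← le_div_iff₀ (hw i), add_div, mul_div_cancel_right₀ _ (hw i).ne'] at hi
  exact hi.trans (h i)

theorem sub_one_le_sum_outdeg_compl (hloop : ∀ i, ¬ E i i) (hpos : ∀ i, 0 < outdeg E i)
    (i : Fin n) : n - 1 ≤ ∑ j ∈ (univ.filter fun j => E i j)ᶜ, outdeg E j := by
  set C := (univ.filter fun j => E i j)ᶜ
  have hiC : i ∈ C := by simp [C, hloop i]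
  have hC : C.card = n - outdeg E i := by rw [card_compl, Fintype.card_fin]; rfl
  have hdn : outdeg E i ≤ n := (card_le_univ _).trans_eq (Fintype.card_fin n)
  calc n - 1 ≤ outdeg E i + (C.erase i).card := by rw [card_erase_of_mem hiC, hC]; omega
    _ ≤ outdeg E i + ∑ j ∈ C.erase i, outdeg E j := by
        gcongr
        simpa using card_nsmul_le_sum (C.erase i) (outdeg E) 1 fun j _ => hpos j
    _ = ∑ j ∈ C, outdeg E j := add_sum_erase C _ hiC

theorem sum_outdeg_filter_add_le (hloop : ∀ i, ¬ E i i) (hpos : ∀ i, 0 < outdeg E i)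
    (i : Fin n) : ∑ j ∈ univ.filter (fun j => E i j), outdeg E j + (n - 1) ≤ ∑ j, outdeg E j := by
  rw [← sum_add_sum_compl (univ.filter fun j => E i j)]
  exact Nat.add_le_add_left (sub_one_le_sum_outdeg_compl hloop hpos i) _

theorem outdeg_add_m2_le (hloop : ∀ i, ¬ E i i) (hpos : ∀ i, 0 < outdeg E i) {Δ : ℕ}
    (hΔ : ∀ i, outdeg E i ≤ Δ) (hbig : ((∑ j, outdeg E j : ℕ) : ℝ) - (n - 1) ≤ 2 * Δ)
    (i : Fin n) :
    outdeg E i + m2 E i ≤ Δ + 2 := by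
  rcases (Nat.one_le_iff_ne_zero.2 (hpos i).ne').eq_or_lt with hi | hi
  · obtain ⟨j, hj⟩ := card_eq_one.1 hi.symm
    have hjΔ : (outdeg E j : ℝ) ≤ Δ := by exact_mod_cast hΔ j
    rw [m2, ← hi, hj, sum_singleton]
    push_cast
    linarith
  · have hS : ((∑ j ∈ univ.filter (fun j => E i j), outdeg E j + (n - 1) : ℕ) : ℝ)
        ≤ (∑ j, outdeg E j : ℕ) := by exact_mod_cast sum_outdeg_filter_add_le hloop hpos i
    push_cast [Nat.cast_sub i.pos] at hS hbig
    apply add_div_le_add_two (by exact_mod_cast hi) (by exact_mod_cast hΔ i)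
    linarith

end Digraph

theorem stmt_5_general {n : ℕ} (E : Fin n → Fin n → Prop) [DecidableRel E]
    (hloop : ∀ i, ¬ E i i)
    (m Δ : ℕ) (hm : m = ∑ i, outdeg E i)
    (hΔ : IsGreatest (Set.range (outdeg E)) Δ)
    (hδ : IsLeast (Set.range (outdeg E)) 1)
    (hbig : ((m : ℝ) - (n - 1)) / 2 ≤ (Δ : ℝ)) :
    qG E ≤ (Δ : ℝ) + 2 := by
  have hpos : ∀ i, 0 < outdeg E i := fun i => hδ.2 ⟨i, rfl⟩
  refine qG_le_of_outdeg_add_m2_le hpos (by positivity) fun i => ?_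
  refine outdeg_add_m2_le hloop hpos (fun i => hΔ.2 ⟨i, rfl⟩) ?_ i
  subst hm
  linarith

/-- if `Δ⁺ ≥ (m − (n−1))/2` and `δ⁺ = 1`, then `q(G) ≤ Δ⁺ + 2`. -/
theorem stmt_5 {n : ℕ} (hn : 3 ≤ n) (E : Fin n → Fin n → Prop) [DecidableRel E]
    (hloop : ∀ i, ¬ E i i) (hsc : StrongConn E)
    (m Δ : ℕ) (hm : m = ∑ i, outdeg E i)
    (hΔ : IsGreatest (Set.range (outdeg E)) Δ)
    (hδ : IsLeast (Set.range (outdeg E)) 1)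
    (hbig : ((m : ℝ) - (n - 1)) / 2 ≤ (Δ : ℝ)) :
    qG E ≤ (Δ : ℝ) + 2 :=
  stmt_5_general E hloop m Δ hm hΔ hδ hbig
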